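/- arXiv:1411.1211 — 2 statements merged into one kernel-verified Lean document; each statement's English description precedes it below -/
import Mathlib

section
/- A payment-free Shapley operator F has a fixed point not proportional to the all-ones vector 𝟏 if and only if there exists a set I ∈ 𝓕⁻ with I ≠ ∅, I ≠ S, and I = Φ*(Φ(I)). -/
/-!
If `u` is a fixed point of `F` that is not constant, the set `I` where `u` is minimal lies in `𝓕⁻`
and the set `J` where `u` is maximal lies in `𝓕⁺` (monotonicity and homogeneity of `F`, compared
against a large multiple of `u - min u`); they are disjoint and nonempty, so `Φ*(Φ(I))` is a
nontrivial closed set. Conversely, for a nontrivial closed `I ∈ 𝓕⁻` the set `Φ(I) ∈ 𝓕⁺` is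
nonempty and disjoint from `I`, so `F` maps the order interval `[𝟏_{Φ(I)}, 𝟏_{S ∖ I}]` into itself;
by Knaster–Tarski it has a fixed point there, which is `0` on `I` and `1` on `Φ(I)`.
-/

noncomputable def paymentFreeShapley {n : ℕ} {A : Fin n → Type*} {B : ∀ i, A i → Type*}
    [∀ i, Fintype (A i)] [∀ i, Nonempty (A i)]
    [∀ i a, Fintype (B i a)] [∀ i a, Nonempty (B i a)]
    (P : ∀ i (a : A i), B i a → Fin n → ℝ) :
    (Fin n → ℝ) → (Fin n → ℝ) :=
  fun x i => ⨅ a : A i, ⨆ b : B i a, ∑ j, P i a b j * x j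

/-- The indicator vector `𝟏_K` of a set of states `K`. -/
noncomputable def indic {n : ℕ} (K : Set (Fin n)) : Fin n → ℝ :=
  K.indicator fun _ => (1 : ℝ)

/-- The family `𝓕⁻ = { I ⊆ S : F(𝟏_{S∖I}) ≤ 𝟏_{S∖I} }`. -/
def Fminus {n : ℕ} (F : (Fin n → ℝ) → (Fin n → ℝ)) : Set (Set (Fin n)) :=
  {I | F (indic Iᶜ) ≤ indic Iᶜ}

/-- The family `𝓕⁺ = { J ⊆ S : 𝟏_J ≤ F(𝟏_J) }`. -/
def Fplus {n : ℕ} (F : (Fin n → ℝ) → (Fin n → ℝ)) : Set (Set (Fin n)) :=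
  {J | indic J ≤ F (indic J)}

/-- `Φ(I)`, the union of all `J ∈ 𝓕⁺` disjoint from `I`. -/
def Phi {n : ℕ} (F : (Fin n → ℝ) → (Fin n → ℝ)) (I : Set (Fin n)) : Set (Fin n) :=
  ⋃₀ {J | J ∈ Fplus F ∧ I ∩ J = ∅}

/-- `Φ*(J)`, the union of all `I ∈ 𝓕⁻` disjoint from `J`. -/
def PhiStar {n : ℕ} (F : (Fin n → ℝ) → (Fin n → ℝ)) (J : Set (Fin n)) : Set (Fin n) :=
  ⋃₀ {I | I ∈ Fminus F ∧ I ∩ J = ∅}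

open Set

theorem Monotone.exists_fixedPoint_mem_Icc {α : Type*} [ConditionallyCompleteLattice α]
    {f : α → α} (hf : Monotone f) {a b : α} (hab : a ≤ b) (ha : a ≤ f a) (hb : f b ≤ b) :
    ∃ x ∈ Icc a b, f x = x := by
  have : Fact (a ≤ b) := ⟨hab⟩
  let g : Icc a b →o Icc a b :=
    ⟨fun x => ⟨f x, ha.trans (hf x.2.1), (hf x.2.2).trans hb⟩, fun _ _ h => hf h⟩
  exact ⟨g.lfp, g.lfp.2, congrArg Subtype.val g.map_lfp⟩

-- `(v i)⁻¹ = 0` when `v i = 0`, so the sum only collects the inverses of the nonzero entries.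
theorem exists_nonneg_one_le_mul_of_ne_zero {ι : Type*} [Fintype ι] {v : ι → ℝ}
    (hv : ∀ i, 0 ≤ v i) : ∃ t : ℝ, 0 ≤ t ∧ ∀ i, v i ≠ 0 → 1 ≤ t * v i := by
  have hinv : ∀ i, 0 ≤ (v i)⁻¹ := fun i => inv_nonneg.2 (hv i)
  refine ⟨∑ i, (v i)⁻¹, Finset.sum_nonneg fun i _ => hinv i, fun i hi => ?_⟩
  calc 1 = (v i)⁻¹ * v i := (inv_mul_cancel₀ hi).symm
    _ ≤ (∑ j, (v j)⁻¹) * v i :=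
      mul_le_mul_of_nonneg_right
        (Finset.single_le_sum (fun j _ => hinv j) (Finset.mem_univ i)) (hv i)

section Indicator
variable {n : ℕ}

lemma indic_nonneg (K : Set (Fin n)) : 0 ≤ indic K :=
  indicator_nonneg fun _ _ => zero_le_one

lemma indic_le_one (K : Set (Fin n)) : indic K ≤ 1 :=
  indicator_le_self' fun _ _ => zero_le_one

lemma indic_mono {K L : Set (Fin n)} (h : K ⊆ L) : indic K ≤ indic L :=
  indicator_le_indicator_of_subset h fun _ => zero_le_one

end Indicator

/-- `F` commutes with the coordinatewise increasing affine maps `t ↦ c + d t`: it is additively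
and positively homogeneous. -/
def IsAffineEquivariant {n : ℕ} (F : (Fin n → ℝ) → (Fin n → ℝ)) : Prop :=
  ∀ c d : ℝ, 0 ≤ d → ∀ x, F (fun i => c + d * x i) = fun i => c + d * F x i

section IsAffineEquivariant
variable {n : ℕ} {F : (Fin n → ℝ) → (Fin n → ℝ)}

lemma IsAffineEquivariant.map_const (hA : IsAffineEquivariant F) (c : ℝ) :
    F (fun _ => c) = fun _ => c := by
  simpa using hA c 0 le_rfl 0

lemma IsAffineEquivariant.map_zero (hA : IsAffineEquivariant F) : F 0 = 0 :=
  hA.map_const 0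

lemma IsAffineEquivariant.map_one (hA : IsAffineEquivariant F) : F 1 = 1 :=
  hA.map_const 1

end IsAffineEquivariant

section Families
variable {n : ℕ} {F : (Fin n → ℝ) → (Fin n → ℝ)} {I J : Set (Fin n)}

lemma mem_Fminus_iff (hF : Monotone F) (h1 : F 1 = 1) :
    I ∈ Fminus F ↔ ∀ i ∈ I, F (indic Iᶜ) i ≤ 0 := by
  refine ⟨fun hI i hi => (hI i).trans_eq (indicator_of_notMem (not_not.2 hi) _), fun h i => ?_⟩
  by_cases hi : i ∈ I
  · exact (h i hi).trans (indic_nonneg _ i)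
  · rw [indic, indicator_of_mem hi]
    exact (hF (indic_le_one _) i).trans_eq (congrFun h1 i)

lemma mem_Fplus_iff (hF : Monotone F) (h0 : F 0 = 0) :
    J ∈ Fplus F ↔ ∀ j ∈ J, 1 ≤ F (indic J) j := by
  refine ⟨fun hJ j hj => (indicator_of_mem hj _).symm.trans_le (hJ j), fun h j => ?_⟩
  by_cases hj : j ∈ J
  · rw [indic, indicator_of_mem hj]
    exact h j hj
  · rw [indic, indicator_of_notMem hj]
    exact (congrFun h0 j).symm.trans_le (hF (indic_nonneg _) j)

lemma sUnion_mem_Fminus (hF : Monotone F) (h1 : F 1 = 1) {𝒮 : Set (Set (Fin n))}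
    (h : 𝒮 ⊆ Fminus F) : ⋃₀ 𝒮 ∈ Fminus F := by
  rw [mem_Fminus_iff hF h1]
  rintro i ⟨I, hI, hi⟩
  calc F (indic (⋃₀ 𝒮)ᶜ) i ≤ F (indic Iᶜ) i :=
        hF (indic_mono (compl_subset_compl.2 (subset_sUnion_of_mem hI))) i
    _ ≤ 0 := (mem_Fminus_iff hF h1).1 (h hI) i hi

lemma sUnion_mem_Fplus (hF : Monotone F) (h0 : F 0 = 0) {𝒮 : Set (Set (Fin n))}
    (h : 𝒮 ⊆ Fplus F) : ⋃₀ 𝒮 ∈ Fplus F := by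
  rw [mem_Fplus_iff hF h0]
  rintro j ⟨J, hJ, hj⟩
  calc 1 ≤ F (indic J) j := (mem_Fplus_iff hF h0).1 (h hJ) j hj
    _ ≤ F (indic (⋃₀ 𝒮)) j := hF (indic_mono (subset_sUnion_of_mem hJ)) j

lemma Phi_mem_Fplus (hF : Monotone F) (h0 : F 0 = 0) (I : Set (Fin n)) : Phi F I ∈ Fplus F :=
  sUnion_mem_Fplus hF h0 fun _ hJ => hJ.1

lemma PhiStar_mem_Fminus (hF : Monotone F) (h1 : F 1 = 1) (J : Set (Fin n)) :
    PhiStar F J ∈ Fminus F :=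
  sUnion_mem_Fminus hF h1 fun _ hI => hI.1

lemma subset_Phi (hJ : J ∈ Fplus F) (h : Disjoint I J) : J ⊆ Phi F I :=
  subset_sUnion_of_mem ⟨hJ, h.inter_eq⟩

lemma subset_PhiStar (hI : I ∈ Fminus F) (h : Disjoint I J) : I ⊆ PhiStar F J :=
  subset_sUnion_of_mem ⟨hI, h.inter_eq⟩

lemma disjoint_Phi : Disjoint I (Phi F I) :=
  disjoint_sUnion_right.2 fun _ hJ => disjoint_iff_inter_eq_empty.2 hJ.2

lemma disjoint_PhiStar : Disjoint (PhiStar F J) J :=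
  disjoint_sUnion_left.2 fun _ hI => disjoint_iff_inter_eq_empty.2 hI.2

lemma Phi_antitone : Antitone (Phi F) := fun _ _ h =>
  sUnion_subset_sUnion fun _ hJ =>
    ⟨hJ.1, ((disjoint_iff_inter_eq_empty.2 hJ.2).mono_left h).inter_eq⟩

lemma Phi_PhiStar_Phi (hF : Monotone F) (h0 : F 0 = 0) (hI : I ∈ Fminus F) :
    Phi F (PhiStar F (Phi F I)) = Phi F I :=
  (Phi_antitone (subset_PhiStar hI disjoint_Phi)).antisymm
    (subset_Phi (Phi_mem_Fplus hF h0 I) disjoint_PhiStar)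

end Families

section FixedPoint
variable {n : ℕ} {F : (Fin n → ℝ) → (Fin n → ℝ)} {u : Fin n → ℝ}

-- For large `t`, `𝟏_{S ∖ I} ≤ t (u - m)`, and `F (t (u - m)) = t (u - m)` vanishes on
-- `I = {u = m}`.
lemma setOf_eq_mem_Fminus (hF : Monotone F) (hA : IsAffineEquivariant F) (hu : F u = u)
    {m : ℝ} (hm : ∀ i, m ≤ u i) : {i | u i = m} ∈ Fminus F := by
  obtain ⟨t, ht, hut⟩ := exists_nonneg_one_le_mul_of_ne_zero fun i => sub_nonneg.2 (hm i)
  have hle : indic {i | u i = m}ᶜ ≤ fun i => -(t * m) + t * u i :=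
    indicator_le' (fun i hi => by linarith [hut i (sub_ne_zero.2 hi)])
      (fun i _ => by nlinarith [hm i])
  rw [mem_Fminus_iff hF hA.map_one]
  intro i (hi : u i = m)
  calc F (indic {i | u i = m}ᶜ) i ≤ F (fun j => -(t * m) + t * u j) i := hF hle i
    _ = -(t * m) + t * u i := by rw [hA _ t ht, hu]
    _ = 0 := by rw [hi]; ring

lemma setOf_eq_mem_Fplus (hF : Monotone F) (hA : IsAffineEquivariant F) (hu : F u = u)
    {M : ℝ} (hM : ∀ i, u i ≤ M) : {i | u i = M} ∈ Fplus F := by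
  obtain ⟨t, ht, hut⟩ := exists_nonneg_one_le_mul_of_ne_zero fun i => sub_nonneg.2 (hM i)
  have hle : (fun i => (1 - t * M) + t * u i) ≤ indic {i | u i = M} :=
    le_indicator (fun i (hi : u i = M) => by rw [hi]; linarith)
      (fun i hi => by linarith [hut i (sub_ne_zero.2 (Ne.symm hi))])
  rw [mem_Fplus_iff hF hA.map_zero]
  intro i (hi : u i = M)
  calc 1 = (1 - t * M) + t * u i := by rw [hi]; ring
    _ = F (fun j => (1 - t * M) + t * u j) i := by rw [hA _ t ht, hu]
    _ ≤ F (indic {i | u i = M}) i := hF hle i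

lemma exists_closed_of_disjoint (hF : Monotone F) (h0 : F 0 = 0) (h1 : F 1 = 1)
    {I J : Set (Fin n)} (hI : I ∈ Fminus F) (hJ : J ∈ Fplus F) (hIJ : Disjoint I J)
    (hIne : I.Nonempty) (hJne : J.Nonempty) :
    ∃ K, K ∈ Fminus F ∧ K ≠ ∅ ∧ K ≠ univ ∧ K = PhiStar F (Phi F K) := by
  refine ⟨PhiStar F (Phi F I), PhiStar_mem_Fminus hF h1 _, ?_, ?_,
    by rw [Phi_PhiStar_Phi hF h0 hI]⟩
  · exact (hIne.mono (subset_PhiStar hI disjoint_Phi)).ne_empty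
  · obtain ⟨j, hj⟩ := hJne
    intro huniv
    exact disjoint_left.1 disjoint_PhiStar (huniv ▸ mem_univ j) (subset_Phi hJ hIJ hj)

lemma exists_closed_of_nonconstant_fixedPoint (hF : Monotone F) (hA : IsAffineEquivariant F)
    (hu : F u = u) (hnc : ¬∃ c : ℝ, u = c • 1) :
    ∃ I, I ∈ Fminus F ∧ I ≠ ∅ ∧ I ≠ univ ∧ I = PhiStar F (Phi F I) := by
  have : Nonempty (Fin n) := by
    by_contra h
    rw [not_nonempty_iff] at h
    exact hnc ⟨0, Subsingleton.elim _ _⟩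
  obtain ⟨i₀, hi₀⟩ := Finite.exists_min u
  obtain ⟨j₀, hj₀⟩ := Finite.exists_max u
  have hne : u i₀ ≠ u j₀ := fun h =>
    hnc ⟨u i₀, funext fun j => by simpa using le_antisymm ((hj₀ j).trans h.ge) (hi₀ j)⟩
  exact exists_closed_of_disjoint hF hA.map_zero hA.map_one (setOf_eq_mem_Fminus hF hA hu hi₀)
    (setOf_eq_mem_Fplus hF hA hu hj₀) (disjoint_left.2 fun i hi hj => hne (hi.symm.trans hj))
    ⟨i₀, rfl⟩ ⟨j₀, rfl⟩

lemma Phi_nonempty_of_closed (h0 : F 0 = 0) {I : Set (Fin n)} (hIuniv : I ≠ univ)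
    (hclosed : I = PhiStar F (Phi F I)) : (Phi F I).Nonempty := by
  rw [nonempty_iff_ne_empty]
  intro hempty
  have huniv : univ ∈ Fminus F := by
    change F (indic univᶜ) ≤ indic univᶜ
    rw [compl_univ, indic, indicator_empty', h0]
  exact hIuniv <| eq_univ_of_univ_subset <|
    hclosed ▸ hempty ▸ subset_PhiStar huniv (disjoint_empty _)

lemma exists_nonconstant_fixedPoint_of_closed (hF : Monotone F) (h0 : F 0 = 0)
    {I : Set (Fin n)} (hI : I ∈ Fminus F) (hIne : I ≠ ∅) (hIuniv : I ≠ univ)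
    (hclosed : I = PhiStar F (Phi F I)) :
    ∃ u : Fin n → ℝ, F u = u ∧ ¬∃ c : ℝ, u = c • 1 := by
  obtain ⟨u, ⟨hJu, huI⟩, hu⟩ := hF.exists_fixedPoint_mem_Icc
    (indic_mono (subset_compl_iff_disjoint_left.2 disjoint_Phi)) (Phi_mem_Fplus hF h0 I) hI
  obtain ⟨i, hi⟩ := nonempty_iff_ne_empty.2 hIne
  obtain ⟨j, hj⟩ := Phi_nonempty_of_closed h0 hIuniv hclosed
  refine ⟨u, hu, fun ⟨c, hc⟩ => ?_⟩
  have hci : c ≤ 0 := by simpa [hc, indic, hi] using huI i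
  have hcj : 1 ≤ c := by simpa [hc, indic, hj] using hJu j
  linarith

theorem exists_nonconstant_fixedPoint_iff_exists_closed (hF : Monotone F)
    (hA : IsAffineEquivariant F) :
    (∃ u : Fin n → ℝ, F u = u ∧ ¬∃ c : ℝ, u = c • 1) ↔
      ∃ I, I ∈ Fminus F ∧ I ≠ ∅ ∧ I ≠ univ ∧ I = PhiStar F (Phi F I) :=
  ⟨fun ⟨_, hu, hnc⟩ => exists_closed_of_nonconstant_fixedPoint hF hA hu hnc,
    fun ⟨_, hI, hIne, hIuniv, hclosed⟩ =>
      exists_nonconstant_fixedPoint_of_closed hF hA.map_zero hI hIne hIuniv hclosed⟩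

end FixedPoint

section Shapley
variable {n : ℕ} {A : Fin n → Type*} {B : ∀ i, A i → Type*}
  [∀ i, Fintype (A i)] [∀ i, Nonempty (A i)]
  [∀ i a, Fintype (B i a)] [∀ i a, Nonempty (B i a)]
  {P : ∀ i (a : A i), B i a → Fin n → ℝ}

lemma paymentFreeShapley_monotone (hP0 : ∀ i a b j, 0 ≤ P i a b j) :
    Monotone (paymentFreeShapley P) := fun _ _ hxy i =>
  ciInf_mono (finite_range _).bddBelow fun a =>
    ciSup_mono (finite_range _).bddAbove fun b =>
      Finset.sum_le_sum fun j _ => mul_le_mul_of_nonneg_left (hxy j) (hP0 i a b j)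

lemma paymentFreeShapley_isAffineEquivariant (hP1 : ∀ i a b, ∑ j, P i a b j = 1) :
    IsAffineEquivariant (paymentFreeShapley P) := by
  intro c d hd x
  funext i
  set g : ℝ → ℝ := fun t => c + d * t
  have hg : Monotone g := fun _ _ hst => add_le_add_right (mul_le_mul_of_nonneg_left hst hd) c
  have hgc : Continuous g := by fun_prop
  have hsum : ∀ a b, ∑ j, P i a b j * (c + d * x j) = g (∑ j, P i a b j * x j) :=
    fun a b => by
      simp only [g, mul_add, Finset.sum_add_distrib, ← Finset.sum_mul, hP1, one_mul,
        Finset.mul_sum]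
      exact congrArg _ (Finset.sum_congr rfl fun j _ => by ring)
  change ⨅ a, ⨆ b, ∑ j, P i a b j * (c + d * x j) = g (⨅ a, ⨆ b, ∑ j, P i a b j * x j)
  simp only [hsum]
  rw [hg.map_ciInf_of_continuousAt hgc.continuousAt (finite_range _).bddBelow]
  congr 1
  funext a
  rw [hg.map_ciSup_of_continuousAt hgc.continuousAt (finite_range _).bddAbove]

end Shapley

/-- a payment-free Shapley operator has a fixed point not proportional to
the all-ones vector if and only if there is a nontrivial subset `I ∈ 𝓕⁻` closed for the
Galois connection `(Φ, Φ*)`. -/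
theorem nontrivial_fixedPoint_iff_exists_closed_nontrivial
    {n : ℕ} {A : Fin n → Type*} {B : ∀ i, A i → Type*}
    [∀ i, Fintype (A i)] [∀ i, Nonempty (A i)]
    [∀ i a, Fintype (B i a)] [∀ i a, Nonempty (B i a)]
    (P : ∀ i (a : A i), B i a → Fin n → ℝ)
    (hP0 : ∀ i a b j, 0 ≤ P i a b j)
    (hP1 : ∀ i a b, ∑ j, P i a b j = 1) :
    (∃ u : Fin n → ℝ, paymentFreeShapley P u = u ∧
        ¬ ∃ c : ℝ, u = c • (1 : Fin n → ℝ)) ↔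
    (∃ I : Set (Fin n), I ∈ Fminus (paymentFreeShapley P) ∧ I ≠ ∅ ∧ I ≠ Set.univ ∧
        I = PhiStar (paymentFreeShapley P) (Phi (paymentFreeShapley P) I)) :=
  exists_nonconstant_fixedPoint_iff_exists_closed (paymentFreeShapley_monotone hP0)
    (paymentFreeShapley_isAffineEquivariant hP1)
end

section
/- Let T : ℝⁿ → ℝⁿ be monotone and additively homogeneous, and suppose there exist u ∈ ℝⁿ and λ ∈ ℝ with T(u) = λ𝟏 + u. Let 𝓔(T) := { v ∈ ℝⁿ : T(v) = λ𝟏 + v } be the set of eigenvectors of T. Then 𝓔(T) is a retract of ℝⁿ by a map that is nonexpansive for the sup-norm; in particular, 𝓔(T) is path-connected. -/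
/-!
Normalize to `S := T - λ𝟏`, whose eigenvectors are its fixed points; `S` is monotone and
additively homogeneous, hence sup-norm nonexpansive. The coordinatewise McShane extension
`ρ x := inf_{v ∈ Fix S} (v + ‖x - v‖𝟏)` of the identity of `Fix S` is nonexpansive, lies above
`x`, and satisfies `S (ρ x) ≤ ρ x`. So the iterates `S^k (ρ x)` decrease; they stay above the
fixed point `u - c𝟏` for large `c`, hence converge to a fixed point `r x`. As a pointwise limit
of nonexpansive maps, `r` is nonexpansive, and it fixes `Fix S` pointwise. Path-connectedness
follows because `Fix S` is a continuous image of `ℝⁿ`.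
-/

open Filter Function Set Topology

section Iterate

variable {α : Type*} {f : α → α} {w y : α}

lemma Monotone.bddBelow_range_iterate [Preorder α] (hf : Monotone f) (hw : IsFixedPt f w)
    (hwy : w ≤ y) : BddBelow (range fun k => f^[k] y) :=
  ⟨w, by
    rintro _ ⟨k, rfl⟩
    exact (hw.iterate k).eq ▸ hf.iterate k hwy⟩

lemma Monotone.tendsto_iterate_ciInf [ConditionallyCompleteLattice α] [TopologicalSpace α]
    [InfConvergenceClass α] (hf : Monotone f) (hw : IsFixedPt f w) (hwy : w ≤ y) (hy : f y ≤ y) :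
    Tendsto (fun k => f^[k] y) atTop (𝓝 (⨅ k, f^[k] y)) :=
  tendsto_atTop_ciInf (hf.antitone_iterate_of_map_le hy) (hf.bddBelow_range_iterate hw hwy)

end Iterate

section

variable {ι : Type*}

def AddHomogeneous (S : (ι → ℝ) → ι → ℝ) : Prop :=
  ∀ (x : ι → ℝ) (c : ℝ), S (x + c • (1 : ι → ℝ)) = S x + c • (1 : ι → ℝ)

lemma AddHomogeneous.map_sub_smul_one {S : (ι → ℝ) → ι → ℝ} (hS : AddHomogeneous S)
    (x : ι → ℝ) (c : ℝ) : S (x - c • (1 : ι → ℝ)) = S x - c • (1 : ι → ℝ) := by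
  simpa only [sub_eq_add_neg, neg_smul] using hS x (-c)

variable [Fintype ι]

lemma le_add_norm_sub_smul_one (x y : ι → ℝ) : x ≤ y + ‖x - y‖ • (1 : ι → ℝ) := fun i => by
  have : x i - y i ≤ ‖x - y‖ := (le_abs_self _).trans (norm_le_pi_norm (x - y) i)
  simp only [Pi.add_apply, Pi.smul_apply, Pi.one_apply, smul_eq_mul, mul_one]
  linarith

lemma lipschitzWith_one_of_le_add_norm_sub_smul_one {f : (ι → ℝ) → ι → ℝ}
    (hf : ∀ x y, f x ≤ f y + ‖x - y‖ • (1 : ι → ℝ)) : LipschitzWith 1 f := by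
  refine LipschitzWith.of_dist_le_mul fun x y => ?_
  rw [NNReal.coe_one, one_mul, dist_eq_norm, dist_eq_norm,
    pi_norm_le_iff_of_nonneg (norm_nonneg _)]
  intro i
  have hxy := hf x y i
  have hyx := hf y x i
  simp only [Pi.add_apply, Pi.smul_apply, Pi.one_apply, smul_eq_mul, mul_one,
    norm_sub_rev y x] at hxy hyx
  rw [Pi.sub_apply, Real.norm_eq_abs, abs_sub_le_iff]
  constructor <;> linarith

lemma AddHomogeneous.lipschitzWith_one {S : (ι → ℝ) → ι → ℝ} (hS : AddHomogeneous S)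
    (hmon : Monotone S) : LipschitzWith 1 S :=
  lipschitzWith_one_of_le_add_norm_sub_smul_one fun x y =>
    (hmon (le_add_norm_sub_smul_one x y)).trans_eq (hS y _)

/-- Coordinatewise McShane extension of the identity of `F`: the largest sup-norm
nonexpansive map that fixes `F` pointwise. -/
noncomputable def mcShaneExtension (F : Set (ι → ℝ)) (x : ι → ℝ) : ι → ℝ :=
  fun i => ⨅ v : F, (v : ι → ℝ) i + ‖x - v‖

section mcShaneExtension

variable {F : Set (ι → ℝ)}

lemma mcShaneExtension_le {v : ι → ℝ} (hv : v ∈ F) (x : ι → ℝ) :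
    mcShaneExtension F x ≤ v + ‖x - v‖ • (1 : ι → ℝ) := fun i => by
  have hbdd : BddBelow (range fun w : F => (w : ι → ℝ) i + ‖x - w‖) :=
    ⟨x i, by
      rintro _ ⟨w, rfl⟩
      simpa using le_add_norm_sub_smul_one x w i⟩
  simpa [mcShaneExtension] using ciInf_le hbdd ⟨v, hv⟩

lemma le_mcShaneExtension (hF : F.Nonempty) (x : ι → ℝ) : x ≤ mcShaneExtension F x := fun i =>
  have := hF.to_subtype
  le_ciInf fun v => by simpa using le_add_norm_sub_smul_one x v i

lemma mcShaneExtension_of_mem {v : ι → ℝ} (hv : v ∈ F) : mcShaneExtension F v = v :=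
  le_antisymm (by simpa using mcShaneExtension_le hv v) (le_mcShaneExtension ⟨v, hv⟩ v)

lemma lipschitzWith_mcShaneExtension (hF : F.Nonempty) : LipschitzWith 1 (mcShaneExtension F) := by
  have := hF.to_subtype
  refine lipschitzWith_one_of_le_add_norm_sub_smul_one fun x y i => ?_
  suffices mcShaneExtension F x i - ‖x - y‖ ≤ mcShaneExtension F y i by simpa [sub_le_iff_le_add]
  refine le_ciInf fun v => ?_
  have hx := mcShaneExtension_le v.2 x i
  have htri : ‖x - v‖ ≤ ‖x - y‖ + ‖y - v‖ := norm_sub_le_norm_sub_add_norm_sub x y v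
  simp only [Pi.add_apply, Pi.smul_apply, Pi.one_apply, smul_eq_mul, mul_one] at hx
  linarith

lemma map_mcShaneExtension_le {S : (ι → ℝ) → ι → ℝ} (hS : AddHomogeneous S) (hmon : Monotone S)
    (hF : F.Nonempty) (hFS : F ⊆ fixedPoints S) (x : ι → ℝ) :
    S (mcShaneExtension F x) ≤ mcShaneExtension F x := fun i =>
  have := hF.to_subtype
  le_ciInf fun v => by
    have := (hmon (mcShaneExtension_le v.2 x)).trans_eq (hS v _) i
    simpa [(hFS v.2).eq] using this

end mcShaneExtension

noncomputable def fixedPointRetraction (S : (ι → ℝ) → ι → ℝ) (x : ι → ℝ) : ι → ℝ :=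
  ⨅ k, S^[k] (mcShaneExtension (fixedPoints S) x)

variable {S : (ι → ℝ) → ι → ℝ}

lemma tendsto_iterate_fixedPointRetraction (hS : AddHomogeneous S) (hmon : Monotone S)
    {u : ι → ℝ} (hu : IsFixedPt S u) (x : ι → ℝ) :
    Tendsto (fun k => S^[k] (mcShaneExtension (fixedPoints S) x)) atTop
      (𝓝 (fixedPointRetraction S x)) := by
  set y := mcShaneExtension (fixedPoints S) x
  have hw : IsFixedPt S (u - ‖u - y‖ • (1 : ι → ℝ)) := by
    rw [IsFixedPt, hS.map_sub_smul_one, hu.eq]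
  have hwy : u - ‖u - y‖ • (1 : ι → ℝ) ≤ y := sub_le_iff_le_add.2 (le_add_norm_sub_smul_one u y)
  exact hmon.tendsto_iterate_ciInf hw hwy
    (map_mcShaneExtension_le (F := fixedPoints S) hS hmon ⟨u, hu⟩ subset_rfl x)

lemma isFixedPt_fixedPointRetraction (hS : AddHomogeneous S) (hmon : Monotone S)
    {u : ι → ℝ} (hu : IsFixedPt S u) (x : ι → ℝ) : IsFixedPt S (fixedPointRetraction S x) :=
  isFixedPt_of_tendsto_iterate (tendsto_iterate_fixedPointRetraction hS hmon hu x)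
    (hS.lipschitzWith_one hmon).continuous.continuousAt

lemma fixedPointRetraction_of_isFixedPt {v : ι → ℝ} (hv : IsFixedPt S v) :
    fixedPointRetraction S v = v := by
  simp only [fixedPointRetraction, mcShaneExtension_of_mem (F := fixedPoints S) hv,
    (hv.iterate _).eq, ciInf_const]

lemma range_fixedPointRetraction (hS : AddHomogeneous S) (hmon : Monotone S)
    {u : ι → ℝ} (hu : IsFixedPt S u) : range (fixedPointRetraction S) = fixedPoints S :=
  Subset.antisymm (range_subset_iff.2 (isFixedPt_fixedPointRetraction hS hmon hu))
    fun v hv => ⟨v, fixedPointRetraction_of_isFixedPt hv⟩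

lemma lipschitzWith_fixedPointRetraction (hS : AddHomogeneous S) (hmon : Monotone S)
    {u : ι → ℝ} (hu : IsFixedPt S u) : LipschitzWith 1 (fixedPointRetraction S) := by
  have hlip (k : ℕ) : LipschitzWith 1 (S^[k] ∘ mcShaneExtension (fixedPoints S)) := by
    simpa using ((hS.lipschitzWith_one hmon).iterate k).comp
      (lipschitzWith_mcShaneExtension (F := fixedPoints S) ⟨u, hu⟩)
  exact (isClosed_setOfPred_lipschitzWith 1).mem_of_tendsto
    (tendsto_pi_nhds.2 (tendsto_iterate_fixedPointRetraction hS hmon hu))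
    (Eventually.of_forall hlip)

end

/-- let `T : ℝⁿ → ℝⁿ` be monotone and additively homogeneous, with an
eigenpair `T(u) = λ𝟏 + u`.  Then the set `𝓔(T)` of eigenvectors of `T` is a retract of
`ℝⁿ` by a sup-norm nonexpansive map; in particular it is path-connected.
(Here `Fin n → ℝ` carries the sup norm.) -/
theorem eigenspace_nonexpansive_retract_and_pathConnected
    {n : ℕ} (T : (Fin n → ℝ) → (Fin n → ℝ))
    (hmon : Monotone T)
    (hah : ∀ (x : Fin n → ℝ) (c : ℝ), T (x + c • (1 : Fin n → ℝ)) = T x + c • (1 : Fin n → ℝ))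
    (u : Fin n → ℝ) (lam : ℝ) (hu : T u = lam • (1 : Fin n → ℝ) + u) :
    (∃ ρ : (Fin n → ℝ) → (Fin n → ℝ),
      (∀ x y : Fin n → ℝ, ‖ρ x - ρ y‖ ≤ ‖x - y‖) ∧
      Set.range ρ = {v : Fin n → ℝ | T v = lam • (1 : Fin n → ℝ) + v} ∧
      ∀ v : Fin n → ℝ, T v = lam • (1 : Fin n → ℝ) + v → ρ v = v) ∧
    IsPathConnected {v : Fin n → ℝ | T v = lam • (1 : Fin n → ℝ) + v} := by
  set S : (Fin n → ℝ) → Fin n → ℝ := fun x => T x - lam • 1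
  have hS : AddHomogeneous S := fun x c => by simp only [S, hah]; abel
  have hSmon : Monotone S := fun x y hxy => sub_le_sub_right (hmon hxy) _
  have heigen (v : Fin n → ℝ) : T v = lam • (1 : Fin n → ℝ) + v ↔ IsFixedPt S v := by
    rw [IsFixedPt, sub_eq_iff_eq_add', eq_comm]
  have hSu : IsFixedPt S u := (heigen u).1 hu
  have hlip := lipschitzWith_fixedPointRetraction hS hSmon hSu
  have hrange := range_fixedPointRetraction hS hSmon hSu
  rw [show {v | T v = lam • (1 : Fin n → ℝ) + v} = fixedPoints S from Set.ext heigen]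
  refine ⟨⟨fixedPointRetraction S, fun x y => ?_, hrange,
    fun v hv => fixedPointRetraction_of_isFixedPt ((heigen v).1 hv)⟩, ?_⟩
  · simpa [dist_eq_norm] using hlip.dist_le_mul x y
  · have := IsTopologicalAddGroup.pathConnectedSpace (E := Fin n → ℝ)
    exact hrange ▸ isPathConnected_range hlip.continuous
end
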